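/- Let ℓ be a prime, n ≥ 1, and q ∈ (Z/ℓ^n)^× with q ≡ 1 mod ℓ but q ≢ 1 mod ℓ^n; let ν be the ℓ-adic valuation of q − 1 (so 1 ≤ ν < n). Then the number of matrices in GL₂(Z/ℓ^n) of determinant q that are conjugate to some matrix of the form [[1, w],[0, q]] equals ℓ^{2n} + ℓ^{2n−2ν−1}. -/

import Mathlib

/-!
A matrix `M` of determinant `q` is conjugate to some `[[1, w], [0, q]]` exactly when it fixes the
first column of some invertible matrix. Since `ℤ/ℓⁿ` is local, such a column can be rescaled to
`(1, y)` or to `(x, 1)` with `ℓ ∣ x`, and as `q ≠ 1` no `M` fixes vectors of both kinds (together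
they would form a basis). Conjugating by the coordinate swap turns the second kind into `(1, ℓt)`.

The matrices of determinant `q` with upper right entry `b` fixing `(1, y)` are
`[[1 - by, b], [-(q - 1 + by) y, q + by]]`, and `y` only matters modulo the annihilator of
`(b, q - 1) = (ℓ ^ m)`, where `m = min (v_ℓ b) ν`. Hence there are `ℓ ^ (n - m)` of them, and
`ℓ ^ (n - m - 1)` when `y` is restricted to `ℓ ℤ/ℓⁿ`. Summing over `b` along the level sets of `m`
telescopes to `ℓ ^ (2n) + ℓ ^ (2n - 2ν - 1)`.
-/

open Matrix Finset

theorem Nat.card_range_eq_of_forall_eq_iff {α β γ : Type*} {f : α → β} {g : α → γ}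
    (h : ∀ a a', f a = f a' ↔ g a = g a') : Nat.card (Set.range f) = Nat.card (Set.range g) := by
  have hker : Setoid.ker f = Setoid.ker g := Setoid.ext fun a a' => h a a'
  exact Nat.card_congr <| (Setoid.quotientKerEquivRange f).symm.trans <|
    hker ▸ Setoid.quotientKerEquivRange g

theorem Finset.sum_comp_eq_sum_range_card_le_sub {ι : Type*} (s : Finset ι) (m : ι → ℕ) {ν : ℕ}
    (hm : ∀ i ∈ s, m i ≤ ν) (F : ℕ → ℤ) :
    ∑ i ∈ s, F (m i) =
      ∑ j ∈ range (ν + 1), ((#{i ∈ s | j ≤ m i} : ℤ) - #{i ∈ s | j + 1 ≤ m i}) * F j := by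
  classical
  rw [← sum_fiberwise_of_maps_to (t := range (ν + 1)) (g := m)
    fun i hi => mem_range.mpr (Nat.lt_succ_of_le (hm i hi))]
  refine sum_congr rfl fun j _ => ?_
  have hlevel : #{i ∈ s | j ≤ m i} = #{i ∈ s | m i = j} + #{i ∈ s | j + 1 ≤ m i} := by
    rw [← card_union_of_disjoint (disjoint_filter.mpr fun i _ h => by omega), ← filter_or]
    congr 1
    ext i
    simp only [mem_filter]
    exact and_congr_right fun _ => by omega
  rw [sum_congr rfl fun i hi => by rw [(mem_filter.mp hi).2], sum_const, hlevel, nsmul_eq_mul]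
  push_cast
  ring

section FixedVectors
variable {R : Type*} [CommRing R]

theorem mulVec_vec2_eq_self_iff (M : Matrix (Fin 2) (Fin 2) R) (x y : R) :
    M *ᵥ ![x, y] = ![x, y] ↔ M 0 0 * x + M 0 1 * y = x ∧ M 1 0 * x + M 1 1 * y = y := by
  simp [funext_iff, Fin.forall_fin_two]

theorem col_zero_eq_single_iff {q : R} {C : Matrix (Fin 2) (Fin 2) R} (hC : C.det = q) :
    C.col 0 = Pi.single 0 1 ↔ ∃ w, C = !![1, w; 0, q] := by
  rw [det_fin_two] at hC
  constructor
  · intro h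
    have h00 : C 0 0 = 1 := by simpa using congrFun h 0
    have h10 : C 1 0 = 0 := by simpa using congrFun h 1
    refine ⟨C 0 1, ?_⟩
    rw [eta_fin_two C, ← hC, h00, h10]
    simp
  · rintro ⟨w, rfl⟩
    ext i
    fin_cases i <;> simp

theorem exists_conj_eq_iff_mulVec_col_zero (M : Matrix (Fin 2) (Fin 2) R) (g : GL (Fin 2) R) :
    (∃ w : R, (g : Matrix (Fin 2) (Fin 2) R) * !![1, w; 0, M.det] * (g⁻¹ : GL (Fin 2) R) = M) ↔
      M *ᵥ (g : Matrix (Fin 2) (Fin 2) R).col 0 = (g : Matrix (Fin 2) (Fin 2) R).col 0 := by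
  set C : Matrix (Fin 2) (Fin 2) R := (g⁻¹ : GL (Fin 2) R) * M * g
  have hC : C.det = M.det := by
    rw [det_mul, det_mul, mul_comm, ← mul_assoc, ← det_mul, Units.mul_inv, det_one, one_mul]
  have hconj : ∀ T, (g : Matrix (Fin 2) (Fin 2) R) * T * (g⁻¹ : GL (Fin 2) R) = M ↔ C = T := by
    intro T
    constructor
    · rintro rfl; simp [C, ← mul_assoc]
    · rintro rfl; simp [C, ← mul_assoc]
  simp_rw [hconj, ← col_zero_eq_single_iff hC, ← mulVec_single_one]
  simp only [C, ← mulVec_mulVec]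
  constructor
  · intro h
    have := congrArg ((g : Matrix (Fin 2) (Fin 2) R) *ᵥ ·) h
    simpa only [mulVec_mulVec, ← mul_assoc, Units.mul_inv, one_mul] using this
  · intro h
    rw [h, mulVec_mulVec, Units.inv_mul, one_mulVec]

theorem isUnit_or_isUnit_of_isUnit_det [IsLocalRing R] {A : Matrix (Fin 2) (Fin 2) R}
    (hA : IsUnit A.det) : IsUnit (A 0 0) ∨ IsUnit (A 1 0) := by
  rw [det_fin_two, sub_eq_add_neg] at hA
  refine (IsLocalRing.isUnit_or_isUnit_of_isUnit_add hA).imp isUnit_of_mul_isUnit_left fun h => ?_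
  exact isUnit_of_mul_isUnit_right (IsUnit.neg_iff _ |>.mp h)

theorem exists_mulVec_col_zero_iff [IsLocalRing R] (M : Matrix (Fin 2) (Fin 2) R) :
    (∃ g : GL (Fin 2) R, M *ᵥ (g : Matrix (Fin 2) (Fin 2) R).col 0 =
        (g : Matrix (Fin 2) (Fin 2) R).col 0) ↔
      (∃ y, M *ᵥ ![1, y] = ![1, y]) ∨ ∃ x, ¬IsUnit x ∧ M *ᵥ ![x, 1] = ![x, 1] := by
  have hscale {v : Fin 2 → R} (hv : M *ᵥ v = v) (s : R) : M *ᵥ (s • v) = s • v := by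
    rw [mulVec_smul, hv]
  constructor
  · rintro ⟨g, hg⟩
    set A : Matrix (Fin 2) (Fin 2) R := (g : Matrix (Fin 2) (Fin 2) R)
    have hcol : A.col 0 = ![A 0 0, A 1 0] := by ext i; fin_cases i <;> rfl
    rw [hcol] at hg
    by_cases ha : IsUnit (A 0 0)
    · obtain ⟨s, hs⟩ := ha.exists_left_inv
      refine .inl ⟨s * A 1 0, ?_⟩
      simpa [hs] using hscale hg s
    · obtain ⟨s, hs⟩ := ((isUnit_or_isUnit_of_isUnit_det
        ((isUnit_iff_isUnit_det A).mp g.isUnit)).resolve_left ha).exists_left_inv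
      refine .inr ⟨s * A 0 0, fun h => ha (isUnit_of_mul_isUnit_right h), ?_⟩
      simpa [hs] using hscale hg s
  · rintro (⟨y, hy⟩ | ⟨x, -, hx⟩)
    · refine ⟨GeneralLinearGroup.mk'' !![1, 0; y, 1] (by simp), ?_⟩
      convert hy using 2 <;> ext i <;> fin_cases i <;> rfl
    · refine ⟨GeneralLinearGroup.mk'' !![x, 1; 1, 0] (by simp), ?_⟩
      convert hx using 2 <;> ext i <;> fin_cases i <;> rfl

theorem det_eq_and_exists_conj_iff [IsLocalRing R] (q : R) (M : Matrix (Fin 2) (Fin 2) R) :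
    (M.det = q ∧ ∃ (w : R) (g : GL (Fin 2) R),
        (g : Matrix (Fin 2) (Fin 2) R) * !![1, w; 0, q] * (g⁻¹ : GL (Fin 2) R) = M) ↔
      (M.det = q ∧ ∃ y, M *ᵥ ![1, y] = ![1, y]) ∨
        (M.det = q ∧ ∃ x, ¬IsUnit x ∧ M *ᵥ ![x, 1] = ![x, 1]) := by
  rw [← and_or_left, ← exists_mulVec_col_zero_iff]
  refine and_congr_right fun hM => ?_
  subst hM
  exact exists_comm.trans (exists_congr (exists_conj_eq_iff_mulVec_col_zero M))

theorem eq_one_of_mulVec_eq_self {M : Matrix (Fin 2) (Fin 2) R} {x y : R}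
    (hy : M *ᵥ ![1, y] = ![1, y]) (hx : M *ᵥ ![x, 1] = ![x, 1]) (hxy : IsUnit (1 - x * y)) :
    M = 1 := by
  have hP : IsUnit !![1, x; y, 1] := (isUnit_iff_isUnit_det _).mpr (by simpa using hxy)
  refine hP.mul_right_cancel ?_
  rw [one_mul]
  simp only [mulVec_vec2_eq_self_iff, mul_one] at hx hy
  ext i j
  fin_cases i <;> fin_cases j <;> simp [mul_apply, hx, hy]

theorem disjoint_fixes_of_ne_one [IsLocalRing R] {q : R} (hq : q ≠ 1) :
    Disjoint (fun M : Matrix (Fin 2) (Fin 2) R => M.det = q ∧ ∃ y, M *ᵥ ![1, y] = ![1, y])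
      (fun M => M.det = q ∧ ∃ x, ¬IsUnit x ∧ M *ᵥ ![x, 1] = ![x, 1]) := by
  rintro r hr₁ hr₂ M hM
  obtain ⟨hdet, y, hy⟩ := hr₁ M hM
  obtain ⟨-, x, hx, hx'⟩ := hr₂ M hM
  have hxy : IsUnit (1 - x * y) :=
    IsLocalRing.isUnit_one_sub_self_of_mem_nonunits _ (mul_mem_nonunits_left hx)
  exact hq (by rw [← hdet, eq_one_of_mulVec_eq_self hy hx' hxy, det_one])

theorem card_det_eq_and_fixes_swap (q : R) (P : R → Prop) :
    Nat.card {M : Matrix (Fin 2) (Fin 2) R // M.det = q ∧ ∃ x, P x ∧ M *ᵥ ![x, 1] = ![x, 1]} =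
      Nat.card {M : Matrix (Fin 2) (Fin 2) R // M.det = q ∧ ∃ y, P y ∧ M *ᵥ ![1, y] = ![1, y]} := by
  refine Nat.card_congr <| Equiv.subtypeEquiv (reindex (Equiv.swap 0 1) (Equiv.swap 0 1))
    fun M => and_congr (by rw [det_reindex_self]) <| exists_congr fun x => and_congr_right fun _ => ?_
  simp only [mulVec_vec2_eq_self_iff, reindex_apply, submatrix_apply, Equiv.symm_swap,
    Equiv.swap_apply_left, Equiv.swap_apply_right]
  constructor <;> rintro ⟨h₁, h₂⟩ <;> exact ⟨by linear_combination h₂, by linear_combination h₁⟩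

def fixingMatrix (q b y : R) : Matrix (Fin 2) (Fin 2) R :=
  !![1 - b * y, b; -(q - 1 + b * y) * y, q + b * y]

theorem det_eq_and_mulVec_eq_self_iff {q y : R} {M : Matrix (Fin 2) (Fin 2) R} :
    M.det = q ∧ M *ᵥ ![1, y] = ![1, y] ↔ M = fixingMatrix q (M 0 1) y := by
  rw [mulVec_vec2_eq_self_iff, det_fin_two]
  constructor
  · rintro ⟨hdet, h0, h1⟩
    have h11 : M 1 1 = q + M 0 1 * y := by linear_combination hdet - M 1 1 * h0 + M 0 1 * h1
    ext i j
    fin_cases i <;> fin_cases j <;> simp only [fixingMatrix, of_apply, cons_val', cons_val_zero,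
      cons_val_one, empty_val', cons_val_fin_one, Fin.zero_eta, Fin.mk_one]
    · linear_combination h0
    · linear_combination h1 - y * h11
    · exact h11
  · intro h
    rw [h, fixingMatrix]
    simp only [of_apply, cons_val', cons_val_zero, cons_val_one, empty_val', cons_val_fin_one]
    refine ⟨by ring, by ring, by ring⟩

theorem fixingMatrix_eq_fixingMatrix_iff (q b y y' : R) :
    fixingMatrix q b y = fixingMatrix q b y' ↔ b * y = b * y' ∧ (q - 1) * y = (q - 1) * y' := by
  simp only [fixingMatrix, ← Matrix.ext_iff, Fin.forall_fin_two, of_apply, cons_val',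
    cons_val_zero, cons_val_one, empty_val', cons_val_fin_one]
  constructor
  · rintro ⟨⟨h00, -⟩, h10, -⟩
    have hb : b * y = b * y' := by linear_combination -h00
    exact ⟨hb, by linear_combination -h10 - (y + y') * hb⟩
  · rintro ⟨hb, hc⟩
    exact ⟨⟨by rw [hb], trivial⟩, by linear_combination -hc - (y + y') * hb, by rw [hb]⟩

theorem card_det_eq_and_fixes_eq_sum [Fintype R] [DecidableEq R] (q a : R) :
    Nat.card {M : Matrix (Fin 2) (Fin 2) R // M.det = q ∧ ∃ t, M *ᵥ ![1, a * t] = ![1, a * t]} =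
      ∑ b, Nat.card (Set.range fun t => fixingMatrix q b (a * t)) := by
  rw [← Nat.card_congr (Equiv.sigmaFiberEquiv fun M : {M : Matrix (Fin 2) (Fin 2) R //
    M.det = q ∧ ∃ t, M *ᵥ ![1, a * t] = ![1, a * t]} => M.1 0 1), Nat.card_sigma]
  refine sum_congr rfl fun b _ => Nat.card_congr <|
    (Equiv.subtypeSubtypeEquivSubtypeInter _ (fun M : Matrix (Fin 2) (Fin 2) R => M 0 1 = b)).trans <|
      Equiv.subtypeEquivRight fun M => ?_
  simp only [Set.mem_range]
  constructor
  · rintro ⟨⟨hdet, t, ht⟩, rfl⟩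
    exact ⟨t, (det_eq_and_mulVec_eq_self_iff.mp ⟨hdet, ht⟩).symm⟩
  · rintro ⟨t, rfl⟩
    exact ⟨⟨(det_eq_and_mulVec_eq_self_iff.mpr rfl).1, t,
      (det_eq_and_mulVec_eq_self_iff.mpr rfl).2⟩, rfl⟩

theorem card_range_fixingMatrix {q a b d : R} (h : ∀ z, b * z = 0 ∧ (q - 1) * z = 0 ↔ d * z = 0) :
    Nat.card (Set.range fun t => fixingMatrix q b (a * t)) =
      Nat.card (Set.range fun t => d * a * t) := by
  refine Nat.card_range_eq_of_forall_eq_iff fun t t' => ?_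
  have := h (a * (t - t'))
  simp only [mul_sub, sub_eq_zero, ← mul_assoc] at this
  rw [fixingMatrix_eq_fixingMatrix_iff]
  simpa only [← mul_assoc] using this

end FixedVectors

section CappedMultiplicity
open Classical
variable {R : Type*} [CommRing R] {π : R} {ν : ℕ}

/-- `min ν (v_π b)`, with value `ν` at `b = 0`. -/
noncomputable def cappedMultiplicity (π : R) (ν : ℕ) (b : R) : ℕ :=
  Nat.findGreatest (fun j => π ^ j ∣ b) ν

theorem cappedMultiplicity_le (b : R) : cappedMultiplicity π ν b ≤ ν := Nat.findGreatest_le ν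

theorem pow_cappedMultiplicity_dvd (b : R) : π ^ cappedMultiplicity π ν b ∣ b :=
  Nat.findGreatest_spec (P := fun j => π ^ j ∣ b) (Nat.zero_le ν) (by simp)

theorem le_cappedMultiplicity_iff {j : ℕ} (hj : j ≤ ν) (b : R) :
    j ≤ cappedMultiplicity π ν b ↔ π ^ j ∣ b :=
  ⟨fun h => (pow_dvd_pow π h).trans (pow_cappedMultiplicity_dvd b),
    Nat.le_findGreatest (P := fun j => π ^ j ∣ b) hj⟩

theorem and_mul_eq_zero_iff_pow_cappedMultiplicity_mul (hπ : ∀ x : R, ¬IsUnit x → π ∣ x)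
    {u : R} (hu : IsUnit u) (b z : R) :
    b * z = 0 ∧ π ^ ν * u * z = 0 ↔ π ^ cappedMultiplicity π ν b * z = 0 := by
  set m := cappedMultiplicity π ν b
  obtain ⟨t, ht⟩ := pow_cappedMultiplicity_dvd (π := π) (ν := ν) b
  have hmν : m ≤ ν := cappedMultiplicity_le b
  constructor
  · rintro ⟨hb, hc⟩
    rcases hmν.eq_or_lt with hm | hm
    · obtain ⟨v, hv⟩ := hu.exists_left_inv
      rw [hm]
      linear_combination v * hc - π ^ ν * z * hv
    · have ht_unit : IsUnit t := by
        by_contra h'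
        obtain ⟨s, hs⟩ := hπ t h'
        refine Nat.findGreatest_is_greatest (P := fun j => π ^ j ∣ b) (Nat.lt_succ_self m) hm ?_
        exact ⟨s, by rw [ht, hs, pow_succ, mul_assoc]⟩
      obtain ⟨v, hv⟩ := ht_unit.exists_left_inv
      linear_combination v * hb - v * z * ht - π ^ m * z * hv
  · intro h
    have hpow : π ^ ν = π ^ (ν - m) * π ^ m := by rw [← pow_add, Nat.sub_add_cancel hmν]
    constructor
    · rw [ht]; linear_combination t * h
    · linear_combination (π ^ (ν - m) * u) * h + u * z * hpow

end CappedMultiplicity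

namespace ZMod
variable {ℓ n : ℕ}

theorem prime_dvd_of_not_isUnit (hℓ : ℓ.Prime) {x : ZMod (ℓ ^ n)} (hx : ¬IsUnit x) :
    (ℓ : ZMod (ℓ ^ n)) ∣ x := by
  have : NeZero (ℓ ^ n) := ⟨pow_ne_zero n hℓ.ne_zero⟩
  contrapose! hx
  have hval : ¬ℓ ∣ x.val := fun h => hx (by simpa using Nat.cast_dvd_cast (α := ZMod (ℓ ^ n)) h)
  rw [← natCast_zmod_val x, isUnit_iff_coprime]
  exact ((Nat.Prime.coprime_iff_not_dvd hℓ).mpr hval).symm.pow_right n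

theorem not_isUnit_of_prime_dvd (hℓ : ℓ.Prime) (hn : n ≠ 0) {x : ZMod (ℓ ^ n)}
    (hx : (ℓ : ZMod (ℓ ^ n)) ∣ x) : ¬IsUnit x := by
  obtain ⟨y, rfl⟩ := hx
  intro hu
  exact (isUnit_prime_iff_not_dvd hℓ).mp (isUnit_of_mul_isUnit_left hu) (dvd_pow_self ℓ hn)

theorem isLocalRing_prime_pow (hℓ : ℓ.Prime) (hn : n ≠ 0) : IsLocalRing (ZMod (ℓ ^ n)) :=
  have : Fact (1 < ℓ ^ n) := ⟨Nat.one_lt_pow hn hℓ.one_lt⟩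
  .of_nonunits_add fun _ _ ha hb => not_isUnit_of_prime_dvd hℓ hn <|
    dvd_add (prime_dvd_of_not_isUnit hℓ ha) (prime_dvd_of_not_isUnit hℓ hb)

theorem exists_not_isUnit_and_iff (hℓ : ℓ.Prime) (hn : n ≠ 0) (P : ZMod (ℓ ^ n) → Prop) :
    (∃ x, ¬IsUnit x ∧ P x) ↔ ∃ t, P (ℓ * t) :=
  ⟨fun ⟨_, hx, h⟩ => let ⟨t, ht⟩ := prime_dvd_of_not_isUnit hℓ hx; ⟨t, ht ▸ h⟩,
    fun ⟨_, h⟩ => ⟨_, not_isUnit_of_prime_dvd hℓ hn (dvd_mul_right _ _), h⟩⟩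

theorem card_range_pow_mul [NeZero ℓ] {k : ℕ} (hk : k ≤ n) :
    Nat.card (Set.range fun t : ZMod (ℓ ^ n) => (ℓ : ZMod (ℓ ^ n)) ^ k * t) = ℓ ^ (n - k) := by
  have hrange : Set.range (fun t : ZMod (ℓ ^ n) => (ℓ : ZMod (ℓ ^ n)) ^ k * t) =
      AddSubgroup.zmultiples ((ℓ ^ k : ℕ) : ZMod (ℓ ^ n)) := by
    ext x
    simp only [Set.mem_range, SetLike.mem_coe, AddSubgroup.mem_zmultiples_iff, zsmul_eq_mul,
      Nat.cast_pow]
    constructor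
    · rintro ⟨t, rfl⟩
      exact ⟨t.val, by rw [Int.cast_natCast, natCast_zmod_val, mul_comm]⟩
    · rintro ⟨i, rfl⟩
      exact ⟨i, mul_comm _ _⟩
  rw [hrange, SetLike.coe_sort_coe, Nat.card_zmultiples, addOrderOf_coe _ (NeZero.ne _),
    Nat.gcd_eq_right (pow_dvd_pow ℓ hk), Nat.pow_div hk (Nat.pos_of_neZero ℓ)]

open Classical in
theorem card_pow_dvd [NeZero ℓ] {k : ℕ} (hk : k ≤ n) :
    #{x : ZMod (ℓ ^ n) | (ℓ : ZMod (ℓ ^ n)) ^ k ∣ x} = ℓ ^ (n - k) := by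
  rw [← card_range_pow_mul hk, ← Nat.card_eq_finsetCard]
  congr
  ext x
  simp [Dvd.dvd, eq_comm]

theorem exists_isUnit_eq_pow_padicValNat_mul (hℓ : ℓ.Prime) {x : ZMod (ℓ ^ n)} (hx : x ≠ 0) :
    ∃ u, IsUnit u ∧ x = (ℓ : ZMod (ℓ ^ n)) ^ padicValNat ℓ x.val * u := by
  have : Fact ℓ.Prime := ⟨hℓ⟩
  have : NeZero (ℓ ^ n) := ⟨pow_ne_zero n hℓ.ne_zero⟩
  have hval : x.val ≠ 0 := (val_ne_zero x).mpr hx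
  obtain ⟨t, ht⟩ := pow_padicValNat_dvd (p := ℓ) (n := x.val)
  set v := padicValNat ℓ x.val
  refine ⟨t, ?_, by rw [← natCast_zmod_val x, ht]; push_cast; rfl⟩
  have hdvd : ¬ℓ ∣ t := by
    rintro ⟨s, rfl⟩
    exact pow_succ_padicValNat_not_dvd hval ⟨s, by rw [pow_succ, mul_assoc]; exact ht⟩
  rw [isUnit_iff_coprime]
  exact ((Nat.Prime.coprime_iff_not_dvd hℓ).mpr hdvd).symm.pow_right n

theorem card_det_eq_and_fixes_pow_mul [NeZero ℓ] (hℓ : ℓ.Prime) {q u : ZMod (ℓ ^ n)} (hu : IsUnit u) {ν k : ℕ}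
    (hq : q - 1 = (ℓ : ZMod (ℓ ^ n)) ^ ν * u) (hνk : ν + k ≤ n) :
    Nat.card {M : Matrix (Fin 2) (Fin 2) (ZMod (ℓ ^ n)) // M.det = q ∧
        ∃ t, M *ᵥ ![1, (ℓ : ZMod (ℓ ^ n)) ^ k * t] = ![1, (ℓ : ZMod (ℓ ^ n)) ^ k * t]} =
      ∑ b, ℓ ^ (n - (cappedMultiplicity (ℓ : ZMod (ℓ ^ n)) ν b + k)) := by
  rw [card_det_eq_and_fixes_eq_sum]
  refine sum_congr rfl fun b _ => ?_
  rw [card_range_fixingMatrix (d := (ℓ : ZMod (ℓ ^ n)) ^ cappedMultiplicity (ℓ : ZMod (ℓ ^ n)) ν b)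
    fun z => hq ▸ and_mul_eq_zero_iff_pow_cappedMultiplicity_mul
      (fun _ => prime_dvd_of_not_isUnit hℓ) hu b z, ← pow_add,
    card_range_pow_mul (by have := cappedMultiplicity_le (π := (ℓ : ZMod (ℓ ^ n))) (ν := ν) b; omega)]


theorem sum_pow_sub_cappedMultiplicity [NeZero ℓ] {ν : ℕ} (hν : ν < n) :
    ∑ b : ZMod (ℓ ^ n), (ℓ ^ (n - cappedMultiplicity (ℓ : ZMod (ℓ ^ n)) ν b) +
      ℓ ^ (n - (cappedMultiplicity (ℓ : ZMod (ℓ ^ n)) ν b + 1))) =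
        ℓ ^ (2 * n) + ℓ ^ (2 * n - 2 * ν - 1) := by
  classical
  set m := cappedMultiplicity (ℓ : ZMod (ℓ ^ n)) ν
  set P : ℕ → ℤ := fun j => (ℓ : ℤ) ^ (n - j)
  have hm : ∀ b ∈ (univ : Finset (ZMod (ℓ ^ n))), m b ≤ ν := fun b _ => cappedMultiplicity_le b
  have hN : ∀ j ≤ ν, (#{b | j ≤ m b} : ℤ) = P j := by
    intro j hj
    rw [filter_congr fun b _ => le_cappedMultiplicity_iff hj b]
    convert congrArg ((↑) : ℕ → ℤ) (card_pow_dvd (ℓ := ℓ) (n := n) (by omega : j ≤ n))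
    push_cast; rfl
  have hN' : #{b | ν + 1 ≤ m b} = 0 :=
    card_eq_zero.mpr (filter_false_of_mem fun b hb => by have := hm b hb; omega)
  have hsq : (ℓ : ℤ) ^ (2 * n) = P 0 ^ 2 := by simp only [P, ← pow_mul, Nat.sub_zero, mul_comm]
  have hcross : (ℓ : ℤ) ^ (2 * n - 2 * ν - 1) = P ν * P (ν + 1) := by
    simp only [P, ← pow_add]; congr 1; omega
  rw [← Nat.cast_inj (R := ℤ)]
  push_cast
  calc ∑ b, ((ℓ : ℤ) ^ (n - m b) + (ℓ : ℤ) ^ (n - (m b + 1)))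
      = ∑ j ∈ range (ν + 1), ((#{b | j ≤ m b} : ℤ) - #{b | j + 1 ≤ m b}) * (P j + P (j + 1)) :=
        sum_comp_eq_sum_range_card_le_sub univ m hm (fun j => P j + P (j + 1))
    _ = ∑ j ∈ range ν, (P j ^ 2 - P (j + 1) ^ 2) + P ν * (P ν + P (ν + 1)) := by
        rw [sum_range_succ, hN ν le_rfl, hN', Nat.cast_zero, sub_zero]
        congr 1
        refine sum_congr rfl fun j hj => ?_
        rw [mem_range] at hj
        rw [hN j hj.le, hN (j + 1) hj]
        ring
    _ = (ℓ : ℤ) ^ (2 * n) + (ℓ : ℤ) ^ (2 * n - 2 * ν - 1) := by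
        rw [sum_range_sub' (fun j => P j ^ 2), hsq, hcross]
        ring

end ZMod

/-- The number of matrices in `GL₂(Z/ℓ^n)` of determinant `q` conjugate to some
`[[1, w],[0, q]]`, when `q ≡ 1 mod ℓ` but `q ≠ 1` in `Z/ℓ^n`. -/
theorem stmt10 (ℓ : ℕ) (hℓ : ℓ.Prime) (n : ℕ) (q : ZMod (ℓ ^ n))
    (hqn : q ≠ 1) (ν : ℕ) (hν : ν = padicValNat ℓ (q - 1).val) (hνn : ν < n) :
    Nat.card {M : Matrix (Fin 2) (Fin 2) (ZMod (ℓ ^ n)) //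
        M.det = q ∧ ∃ (w : ZMod (ℓ ^ n)) (g : GL (Fin 2) (ZMod (ℓ ^ n))),
          (g : Matrix (Fin 2) (Fin 2) (ZMod (ℓ ^ n))) * (!![1, w; 0, q]) *
              ((g⁻¹ : GL (Fin 2) (ZMod (ℓ ^ n))) : Matrix (Fin 2) (Fin 2) (ZMod (ℓ ^ n))) =
            M} =
      ℓ ^ (2 * n) + ℓ ^ (2 * n - 2 * ν - 1) := by
  have hn : n ≠ 0 := by omega
  have : NeZero ℓ := ⟨hℓ.ne_zero⟩
  have := ZMod.isLocalRing_prime_pow hℓ hn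
  obtain ⟨u, hu, hqu⟩ := ZMod.exists_isUnit_eq_pow_padicValNat_mul hℓ (sub_ne_zero.mpr hqn)
  rw [← hν] at hqu
  have hunit_col := ZMod.card_det_eq_and_fixes_pow_mul hℓ hu hqu (k := 0) (by omega)
  have hnonunit_col := ZMod.card_det_eq_and_fixes_pow_mul hℓ hu hqu (k := 1) (by omega)
  simp only [pow_zero, one_mul, add_zero, pow_one] at hunit_col hnonunit_col
  rw [Nat.card_congr (Equiv.subtypeEquivRight (det_eq_and_exists_conj_iff q)),
    Nat.card_eq_fintype_card, Fintype.card_subtype_or_disjoint _ _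
      (disjoint_fixes_of_ne_one hqn), ← Nat.card_eq_fintype_card,
    ← Nat.card_eq_fintype_card, card_det_eq_and_fixes_swap, hunit_col]
  simp_rw [ZMod.exists_not_isUnit_and_iff hℓ hn]
  rw [hnonunit_col, ← sum_add_distrib, ZMod.sum_pow_sub_cappedMultiplicity hνn]
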